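/- arXiv:2411.08458 — 2 statements merged into one kernel-verified Lean document; each statement's English description precedes it below -/
import Mathlib

section
/- Let H be a hypergraph and K(H) the induced symmetric simplicial set. For nonempty finite subsets I ⊆ f̃(x), I' ⊆ f̃(x') of vertices, defining W_I := U_{[v_i]_x} for any tuple [v_i]_x with underlying vertex set I (which is well-defined), we have: W_I ∩ W_{I'} = W_{I ∪ I'} if there exists x'' ∈ E(H) ⊔ V(H) with I ∪ I' ⊆ f̃(x''), and W_I ∩ W_{I'} = ∅ otherwise. -/
/-- A hypergraph: edge set `E`, vertex set `V`, and a structure map `f` assigning to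
each edge a nonempty set of vertices that is not a single vertex. -/
structure KHypergraph where
  E : Type
  V : Type
  f : E → Set V
  f_nonempty : ∀ e, (f e).Nonempty
  f_not_vertex : ∀ e, ¬ ∃ v, f e = {v}

/-- The extended structure map `f̃ : E ⊔ V → P(V)`. -/
def KHypergraph.ext (H : KHypergraph) : H.E ⊕ H.V → Set H.V :=
  Sum.elim H.f (fun v => {v})

/-- The `n`-simplices of `K(H)`: equivalence classes (identified by their underlying
tuple of vertices) of `(n+1)`-tuples with entries in `f̃(x)` for some `x ∈ E ⊔ V`. -/
def KHypergraph.Tup (H : KHypergraph) (n : ℕ) : Type :=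
  { t : Fin (n + 1) → H.V // ∃ x : H.E ⊕ H.V, ∀ i, t i ∈ H.ext x }

/-- The set of simplices of `K(H)`. -/
def KHypergraph.Simp (H : KHypergraph) : Type := Σ n, H.Tup n

/-- The natural preorder on simplices: `s ≲ u` iff `s = K(H)(μ)(u)` for some
function `μ`, i.e. the tuple of `s` is obtained from that of `u` by precomposition. -/
def KHypergraph.rel (H : KHypergraph) (s u : H.Simp) : Prop :=
  ∃ μ : Fin (s.1 + 1) → Fin (u.1 + 1), u.2.1 ∘ μ = s.2.1

/-- The basic open set `U_s = {u | s ≲ u}`. -/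
def KHypergraph.U (H : KHypergraph) (s : H.Simp) : Set H.Simp :=
  { u | H.rel s u }

namespace KHypergraph

variable (H : KHypergraph)

lemma rel_iff_range_subset (s u : H.Simp) :
    H.rel s u ↔ Set.range s.2.1 ⊆ Set.range u.2.1 := by
  constructor
  · rintro ⟨μ, hμ⟩ v ⟨i, rfl⟩
    exact ⟨μ i, congrFun hμ i⟩
  · intro h
    choose μ hμ using fun i => h ⟨i, rfl⟩
    exact ⟨μ, funext hμ⟩

lemma mem_U_iff {s u : H.Simp} : u ∈ H.U s ↔ Set.range s.2.1 ⊆ Set.range u.2.1 :=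
  H.rel_iff_range_subset s u

lemma exists_range_subset_ext (u : H.Simp) : ∃ x, Set.range u.2.1 ⊆ H.ext x := by
  obtain ⟨x, hx⟩ := u.2.2
  exact ⟨x, Set.range_subset_iff.2 hx⟩

lemma U_eq_of_range_eq {s s₂ : H.Simp} (h : Set.range s.2.1 = Set.range s₂.2.1) :
    H.U s = H.U s₂ := by
  ext u
  rw [mem_U_iff, mem_U_iff, h]

lemma U_inter_U_eq_of_range_eq_union {s s' s'' : H.Simp}
    (h : Set.range s''.2.1 = Set.range s.2.1 ∪ Set.range s'.2.1) :
    H.U s ∩ H.U s' = H.U s'' := by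
  ext u
  rw [Set.mem_inter_iff, mem_U_iff, mem_U_iff, mem_U_iff, h, Set.union_subset_iff]

lemma U_inter_U_eq_empty {s s' : H.Simp}
    (h : ¬ ∃ x, Set.range s.2.1 ∪ Set.range s'.2.1 ⊆ H.ext x) :
    H.U s ∩ H.U s' = ∅ := by
  refine Set.eq_empty_of_forall_notMem fun u ⟨hs, hs'⟩ => h ?_
  obtain ⟨x, hx⟩ := H.exists_range_subset_ext u
  exact ⟨x, Set.union_subset ((H.mem_U_iff.1 hs).trans hx) ((H.mem_U_iff.1 hs').trans hx)⟩

end KHypergraph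

/-- `W_I := U_{[v_i]_x}` for any tuple with vertex set `I` is well defined, and
`W_I ∩ W_{I'} = W_{I ∪ I'}` if `I ∪ I' ⊆ f̃(x'')` for some `x''`, and `= ∅` otherwise. -/
theorem U_inter_U (H : KHypergraph) (s s' : H.Simp) :
    (∀ s₂ : H.Simp, Set.range s.2.1 = Set.range s₂.2.1 → H.U s = H.U s₂) ∧
    ((∃ x'' : H.E ⊕ H.V, Set.range s.2.1 ∪ Set.range s'.2.1 ⊆ H.ext x'') →
      ∀ s'' : H.Simp, Set.range s''.2.1 = Set.range s.2.1 ∪ Set.range s'.2.1 →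
        H.U s ∩ H.U s' = H.U s'') ∧
    (¬ (∃ x'' : H.E ⊕ H.V, Set.range s.2.1 ∪ Set.range s'.2.1 ⊆ H.ext x'') →
      H.U s ∩ H.U s' = ∅) :=
  ⟨fun _ => H.U_eq_of_range_eq, fun _ _ => H.U_inter_U_eq_of_range_eq_union,
    H.U_inter_U_eq_empty⟩
end

section
/- For any hypergraph H, the symmetric simplicial set K(H) is closed: the collection {∅} ∪ {U_σ : σ ∈ K(H)^} of basic open sets of simplices is closed under finite (binary) intersections. -/
/-- A hypergraph: edge set `E`, vertex set `V`, and a structure map `f` assigning to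
each edge a nonempty set of vertices that is not a single vertex. -/
structure Hypergraph' where
  E : Type
  V : Type
  f : E → Set V
  f_nonempty : ∀ e, (f e).Nonempty
  f_not_vertex : ∀ e, ¬ ∃ v, f e = {v}

/-- The extended structure map `f̃ : E ⊔ V → P(V)`. -/
def Hypergraph'.ext (H : Hypergraph') : H.E ⊕ H.V → Set H.V :=
  Sum.elim H.f (fun v => {v})

/-- The `n`-simplices of `K(H)`: equivalence classes (identified by their underlying
tuple of vertices) of `(n+1)`-tuples with entries in `f̃(x)` for some `x ∈ E ⊔ V`. -/
def Hypergraph'.Tup (H : Hypergraph') (n : ℕ) : Type :=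
  { t : Fin (n + 1) → H.V // ∃ x : H.E ⊕ H.V, ∀ i, t i ∈ H.ext x }

/-- The set of simplices of `K(H)`. -/
def Hypergraph'.Simp (H : Hypergraph') : Type := Σ n, H.Tup n

/-- The natural preorder on simplices: `s ≲ u` iff `s = K(H)(μ)(u)` for some
function `μ`, i.e. the tuple of `s` is obtained from that of `u` by precomposition. -/
def Hypergraph'.rel (H : Hypergraph') (s u : H.Simp) : Prop :=
  ∃ μ : Fin (s.1 + 1) → Fin (u.1 + 1), u.2.1 ∘ μ = s.2.1

/-- The basic open set `U_s = {u | s ≲ u}`. -/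
def Hypergraph'.U (H : Hypergraph') (s : H.Simp) : Set H.Simp :=
  { u | H.rel s u }

/-! Precomposition with some `μ` can realise any tuple whose entries occur in the target, so
`σ ≲ τ` just says that the vertices of `σ` are among those of `τ`. Hence `U_σ ∩ U_σ'` consists
of the simplices containing all vertices of `σ` and `σ'`. If it contains some `τ`, lying in
`f̃ x`, then all those vertices lie in `f̃ x`, so the concatenation of the tuples of `σ` and `σ'`
is a simplex, and its basic open set is that intersection. -/

theorem Fin.range_append {α : Type*} {m n : ℕ} (xs : Fin m → α) (ys : Fin n → α) :
    Set.range (Fin.append xs ys) = Set.range xs ∪ Set.range ys := by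
  rw [← Set.Sum.elim_range, ← Fin.append_comp_sumElim]
  exact (finSumFinEquiv.surjective.range_comp _).symm

namespace Hypergraph'

variable {H : Hypergraph'}

abbrev Simp.verts (s : H.Simp) : Set H.V := Set.range s.2.1

theorem rel_iff_verts_subset {s u : H.Simp} : H.rel s u ↔ s.verts ⊆ u.verts := by
  rw [Set.range_subset_range_iff_exists_comp]
  exact exists_congr fun _ => eq_comm

theorem Simp.verts_subset_ext (s : H.Simp) : ∃ x, s.verts ⊆ H.ext x := by
  obtain ⟨x, hx⟩ := s.2.2
  exact ⟨x, Set.range_subset_iff.2 hx⟩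

/-- No cast is needed: `s.1 + 1 + s'.1 + 1` unfolds to `(s.1 + 1) + (s'.1 + 1)`. -/
def Simp.append (s s' : H.Simp) {x : H.E ⊕ H.V} (hs : s.verts ⊆ H.ext x)
    (hs' : s'.verts ⊆ H.ext x) : H.Simp :=
  ⟨s.1 + 1 + s'.1, Fin.append (m := s.1 + 1) (n := s'.1 + 1) s.2.1 s'.2.1, x, fun i =>
    (Set.union_subset hs hs') (Fin.range_append s.2.1 s'.2.1 ▸ Set.mem_range_self i)⟩

theorem Simp.verts_append (s s' : H.Simp) {x : H.E ⊕ H.V} (hs : s.verts ⊆ H.ext x)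
    (hs' : s'.verts ⊆ H.ext x) : (s.append s' hs hs').verts = s.verts ∪ s'.verts :=
  Fin.range_append s.2.1 s'.2.1

theorem U_inter_U_eq_U {s s' s'' : H.Simp} (h : s''.verts = s.verts ∪ s'.verts) :
    H.U s ∩ H.U s' = H.U s'' := by
  ext u
  simp only [U, Set.mem_inter_iff, Set.mem_ofPred_eq, rel_iff_verts_subset, h,
    Set.union_subset_iff]

end Hypergraph'

/-- `K(H)` is closed: the collection `{∅} ∪ {U_σ}` of basic open sets of simplices
is closed under binary intersections. -/
theorem KH_closed (H : Hypergraph') (s s' : H.Simp) :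
    H.U s ∩ H.U s' = ∅ ∨ ∃ s'' : H.Simp, H.U s ∩ H.U s' = H.U s'' := by
  rcases (H.U s ∩ H.U s').eq_empty_or_nonempty with h | ⟨u, hs, hs'⟩
  · exact .inl h
  obtain ⟨x, hx⟩ := u.verts_subset_ext
  have hsx := (Hypergraph'.rel_iff_verts_subset.1 hs).trans hx
  have hs'x := (Hypergraph'.rel_iff_verts_subset.1 hs').trans hx
  exact .inr ⟨s.append s' hsx hs'x, Hypergraph'.U_inter_U_eq_U (s.verts_append s' hsx hs'x)⟩
end
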